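/- Let q, p satisfy the Bessel-kernel coupled system xq' = xp + (-a + [u-w])q, xp' = -xq + (a - [u-w])p with u' = 2q², w' = 2p², and boundary behavior q(x) ~ (x/2)^{a+1}/Γ(a+3/2), p(x) ~ (x/2)^a/Γ(a+1/2) as x → 0⁺. Then 2qp = w - u identically. -/

import Mathlib

/-!
The system gives `(2qp)' = 2q'p + 2qp' = 2p² - 2q² = (w - u)'`, so `2qp - (w - u)` is constant
on `(0, x₁)`. As `x → 0⁺` the boundary asymptotics give `qp ~ c (x/2)^(2a+1) → 0` because
`a > -1/2`, and `u, w → 0`, so the constant is `0`.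
-/

open Filter Topology Set Asymptotics

theorem eqOn_Ioo_of_hasDerivAt_zero_of_tendsto {E : Type*} [NormedAddCommGroup E]
    [NormedSpace ℝ E] {f : ℝ → E} {a b : ℝ} {c : E} (hab : a < b)
    (hf : ∀ x ∈ Ioo a b, HasDerivAt f 0 x) (hlim : Tendsto f (𝓝[>] a) (𝓝 c)) :
    EqOn f (fun _ => c) (Ioo a b) := by
  intro x hx
  have hconst : ∀ y ∈ Ioo a b, f y = f x := fun y hy =>
    isOpen_Ioo.is_const_of_deriv_eq_zero isPreconnected_Ioo
      (fun z hz => (hf z hz).differentiableAt.differentiableWithinAt)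
      (fun z hz => (hf z hz).deriv) hy hx
  refine tendsto_nhds_unique (tendsto_const_nhds.congr' ?_) hlim
  rw [← nhdsWithin_Ioo_eq_nhdsGT hab]
  filter_upwards [self_mem_nhdsWithin] with y hy using (hconst y hy).symm

theorem tendsto_rpow_nhdsGT_zero {r : ℝ} (hr : 0 < r) :
    Tendsto (fun x : ℝ => x ^ r) (𝓝[>] 0) (𝓝 0) := by
  have h := (Real.continuousAt_rpow_const 0 r (Or.inr hr.le)).tendsto
  rw [Real.zero_rpow hr.ne'] at h
  exact h.mono_left nhdsWithin_le_nhds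

theorem tendsto_besselLeadingTerm_mul {a : ℝ} (ha : -1 / 2 < a) :
    Tendsto (fun x : ℝ => (x / 2) ^ (a + 1) / Real.Gamma (a + 3 / 2) *
      ((x / 2) ^ a / Real.Gamma (a + 1 / 2))) (𝓝[>] 0) (𝓝 0) := by
  have hhalf : Tendsto (fun x : ℝ => x / 2) (𝓝[>] 0) (𝓝[>] 0) :=
    tendsto_nhdsWithin_of_tendsto_nhds_of_eventually_within _
      (((continuous_id.div_const 2).tendsto' 0 0 (zero_div 2)).mono_left nhdsWithin_le_nhds)
      (eventually_nhdsWithin_of_forall fun x (hx : 0 < x) => half_pos hx)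
  have h := ((tendsto_rpow_nhdsGT_zero (r := 2 * a + 1) (by linarith)).comp hhalf).div_const
    (Real.Gamma (a + 3 / 2) * Real.Gamma (a + 1 / 2))
  rw [zero_div] at h
  refine h.congr' ?_
  filter_upwards [self_mem_nhdsWithin] with x (hx : 0 < x)
  rw [Function.comp_apply, div_mul_div_comm, ← Real.rpow_add (half_pos hx)]
  ring_nf

def firstIntegral (q p u w : ℝ → ℝ) (x : ℝ) : ℝ := 2 * (q x * p x) - (w x - u x)

theorem hasDerivAt_firstIntegral {a x : ℝ} {q p u w : ℝ → ℝ} (hx : x ≠ 0)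
    (hu : HasDerivAt u (2 * q x ^ 2) x) (hw : HasDerivAt w (2 * p x ^ 2) x)
    (hq : HasDerivAt q ((x * p x + (-a + (u x - w x)) * q x) / x) x)
    (hp : HasDerivAt p ((-(x * q x) + (a - (u x - w x)) * p x) / x) x) :
    HasDerivAt (firstIntegral q p u w) 0 x := by
  have h : HasDerivAt (firstIntegral q p u w) _ x := ((hq.mul hp).const_mul 2).sub (hw.sub hu)
  convert h using 1
  field_simp
  ring

/-- For the Bessel-kernel Tracy–Widom system, the integral `2qp = w - u` holds. -/
theorem stmt16 (a : ℝ) (ha : -1 / 2 < a) (x₁ : ℝ) (hx₁ : 0 < x₁)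
    (q p u w : ℝ → ℝ)
    (hu : ∀ x ∈ Set.Ioo (0 : ℝ) x₁, HasDerivAt u (2 * (q x) ^ 2) x)
    (hw : ∀ x ∈ Set.Ioo (0 : ℝ) x₁, HasDerivAt w (2 * (p x) ^ 2) x)
    (hq : ∀ x ∈ Set.Ioo (0 : ℝ) x₁, HasDerivAt q
      ((x * p x + (-a + (u x - w x)) * q x) / x) x)
    (hp : ∀ x ∈ Set.Ioo (0 : ℝ) x₁, HasDerivAt p
      ((-(x * q x) + (a - (u x - w x)) * p x) / x) x)
    (hu0 : Tendsto u (nhdsWithin 0 (Set.Ioo 0 x₁)) (nhds 0))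
    (hw0 : Tendsto w (nhdsWithin 0 (Set.Ioo 0 x₁)) (nhds 0))
    (hqbc : Tendsto (fun x => q x / ((x / 2) ^ (a + 1) / Real.Gamma (a + 3 / 2)))
      (nhdsWithin 0 (Set.Ioo 0 x₁)) (nhds 1))
    (hpbc : Tendsto (fun x => p x / ((x / 2) ^ a / Real.Gamma (a + 1 / 2)))
      (nhdsWithin 0 (Set.Ioo 0 x₁)) (nhds 1)) :
    ∀ x ∈ Set.Ioo (0 : ℝ) x₁, 2 * (q x * p x) = w x - u x := by
  rw [nhdsWithin_Ioo_eq_nhdsGT hx₁] at hu0 hw0 hqbc hpbc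
  have hqp : Tendsto (fun x => q x * p x) (𝓝[>] 0) (𝓝 0) :=
    ((isEquivalent_of_tendsto_one hqbc).mul (isEquivalent_of_tendsto_one hpbc)).symm.tendsto_nhds
      (tendsto_besselLeadingTerm_mul ha)
  have hlim : Tendsto (firstIntegral q p u w) (𝓝[>] 0) (𝓝 0) := by
    have h := (hqp.const_mul 2).sub (hw0.sub hu0)
    rwa [mul_zero, sub_self, sub_zero] at h
  intro x hx
  have h := eqOn_Ioo_of_hasDerivAt_zero_of_tendsto hx₁ (fun y hy =>
    hasDerivAt_firstIntegral hy.1.ne' (hu y hy) (hw y hy) (hq y hy) (hp y hy)) hlim hx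
  rw [firstIntegral] at h
  linarith
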